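/- Mortal Matrix reduction for strong equivalence: Fix d, n ≥ 1 and matrices X₁, …, Xₙ ∈ ℤ^{d×d}, let R be the semiring (ℤ^{d×d}, +, ·, 0_d, 1_d), and let Π' consist of the facts p(X₁) ←, …, p(Xₙ) ← together with the rule p(Y) ← p(Z₁), p(Z₂), Y =_R Z₁ * Z₂, and let Π = Π' ∪ { ⊥ ← ¬p(0_d) }. Then Π and Π' are strongly equivalent if and only if there exist k ≥ 1 and indices i₁, …, i_k ∈ {1, …, n} with X_{i₁} · X_{i₂} ⋯ X_{i_k} = 0_d; equivalently, iff p(0_d) belongs to the least set of atoms closed under the rules of Π'. -/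

import Mathlib

/-- The two worlds of HT logic. -/
inductive W : Type | H | T
deriving DecidableEq

/-- `W.le w w'` means `w' ≥ w` in the HT order (with `T ≥ H`). -/
def W.le : W → W → Prop
  | .H, _ => True
  | .T, w' => w' = .T

/-- An HT-interpretation: a pair of sets of (variable-free) atoms with `h ⊆ t`. -/
structure HTI (A : Type*) where
  h : Set A
  t : Set A
  sub : h ⊆ t

/-- The component of a pointed HT-interpretation at world `w`. -/
def HTI.at {A : Type*} (I : HTI A) : W → Set A
  | .H => I.h
  | .T => I.t

/-- Semiring terms built from constants and (global) variables by `+` and `*`. -/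
inductive Trm (R : Type) (g : ℕ) : Type
  | const (k : R)
  | var (x : Fin g)
  | add (s t : Trm R g)
  | mul (s t : Trm R g)

/-- Evaluation of a term under an assignment of the global variables. -/
def Trm.eval {R : Type} [Semiring R] {g : ℕ} (γ : Fin g → R) : Trm R g → R
  | .const k => k
  | .var x => γ x
  | .add s t => s.eval γ + t.eval γ
  | .mul s t => s.eval γ * t.eval γ

/-- Variable-free atoms (the domain being the semiring carrier `R`). -/
abbrev GAtom (P R : Type) : Type := P × List R

/-- Instantiating the arguments of an atom with an assignment `γ`. -/
def instA {P R : Type} {g : ℕ} (γ : Fin g → R) (a : P × List (Fin g ⊕ R)) :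
    GAtom P R :=
  (a.1, a.2.map (Sum.elim γ id))

/-- An `AC`-rule `φ ← ψ₁, …, ψₙ, ¬θ₁, …, ¬θ_m` whose head is an atom or `⊥`
    (`none`), with body atoms, negated body atoms, and body algebraic constraints
    that are equalities between semiring terms; its `g` global variables are
    universally quantified over the carrier `R`. -/
structure NRule (P R : Type) : Type where
  g : ℕ
  head : Option (P × List (Fin g ⊕ R))
  pos : List (P × List (Fin g ⊕ R))
  neg : List (P × List (Fin g ⊕ R))
  eqs : List (Trm R g × Trm R g)

/-- HT satisfaction of a rule at `I_w` (`¬θ = θ → ⊥` is satisfied at `I_{w'}` iff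
    `θ` fails at every `w'' ≥ w'`). -/
def NRule.sat {P R : Type} [Semiring R] (I : HTI (GAtom P R)) (w : W)
    (r : NRule P R) : Prop :=
  ∀ γ : Fin r.g → R, ∀ w', W.le w w' →
    ((∀ a ∈ r.pos, instA γ a ∈ I.at w') ∧
      (∀ a ∈ r.neg, ∀ w'', W.le w' w'' → instA γ a ∉ I.at w'') ∧
      (∀ e ∈ r.eqs, Trm.eval γ e.1 = Trm.eval γ e.2)) →
    (match r.head with
      | some a => instA γ a ∈ I.at w'
      | none => False)

/-- HT satisfaction of a program. -/
def progSat {P R : Type} [Semiring R] (Pr : Set (NRule P R))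
    (I : HTI (GAtom P R)) (w : W) : Prop :=
  ∀ r ∈ Pr, r.sat I w

/-- `J` is an equilibrium model of `Pr`. -/
def EqModel {P R : Type} [Semiring R] (Pr : Set (NRule P R))
    (J : Set (GAtom P R)) : Prop :=
  progSat Pr ⟨J, J, le_refl J⟩ .H ∧
    ∀ J' (h : J' ⊆ J), J' ≠ J → ¬ progSat Pr ⟨J', J, h⟩ .H

section MortalMatrix

/-- The semiring `(ℤ^{d×d}, +, ·, 0_d, 1_d)` of `d×d` integer matrices. -/
abbrev MatR (d : ℕ) : Type := Matrix (Fin d) (Fin d) ℤ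

variable {d n : ℕ}

/-- The fact `p(m) ←`. -/
def factRule (m : MatR d) : NRule Unit (MatR d) :=
  ⟨0, some ((), [Sum.inr m]), [], [], []⟩

/-- The constraint rule `⊥ ← ¬p(0_d)`. -/
def botRule (d : ℕ) : NRule Unit (MatR d) :=
  ⟨0, none, [], [((), [Sum.inr (0 : MatR d)])], []⟩

/-- The rule `p(Y) ← p(Z₁), p(Z₂), Y =_R Z₁ * Z₂`. -/
def prodRule (d : ℕ) : NRule Unit (MatR d) :=
  ⟨3, some ((), [Sum.inl 0]), [((), [Sum.inl 1]), ((), [Sum.inl 2])], [],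
    [(Trm.var 0, Trm.mul (Trm.var 1) (Trm.var 2))]⟩

/-- The `AC`-program `Π` of the Mortal Matrix reduction. -/
def mortalProg (X : Fin n → MatR d) : Set (NRule Unit (MatR d)) :=
  {r | ∃ i : Fin n, r = factRule (X i)} ∪ {botRule d, prodRule d}

/-- `Π` from the paper: the facts and the product rule, plus the constraint rule. -/
def mortalProgFull (X : Fin n → MatR d) : Set (NRule Unit (MatR d)) :=
  {r | ∃ i : Fin n, r = factRule (X i)} ∪ {prodRule d} ∪ {botRule d}

/-- `Π'` from the paper: the facts and the product rule only. -/
def mortalProgPos (X : Fin n → MatR d) : Set (NRule Unit (MatR d)) :=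
  {r | ∃ i : Fin n, r = factRule (X i)} ∪ {prodRule d}

/-- Strong equivalence: for every program `Π''`, the equilibrium models of
    `Π₁ ∪ Π''` and `Π₂ ∪ Π''` coincide. -/
def StrongEq {P R : Type} [Semiring R] (P1 P2 : Set (NRule P R)) : Prop :=
  ∀ Pr : Set (NRule P R), ∀ J : Set (GAtom P R),
    EqModel (P1 ∪ Pr) J ↔ EqModel (P2 ∪ Pr) J

/-- The least set of matrices containing `X₁, …, Xₙ` and closed under products,
    i.e. the least set of atoms closed under the rules of `Π'`. -/
def leastClosed (X : Fin n → MatR d) : Set (MatR d) :=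
  ⋂₀ {S : Set (MatR d) | (∀ i : Fin n, X i ∈ S) ∧
    ∀ y z : MatR d, y ∈ S → z ∈ S → y * z ∈ S}

/-!
The least model of `Π'` is `{p(m) | m ∈ leastClosed X}`, and `leastClosed X` is the set of
nonempty products of the `Xᵢ`. If `0_d` is such a product, every HT-model of `Π'` contains
`p(0_d)` already in its `H`-component, hence satisfies `⊥ ← ¬p(0_d)`: then `Π` and `Π'` have
the same HT-models and are strongly equivalent. Otherwise the least model of `Π'` is an
equilibrium model of `Π' ∪ ∅` that violates `⊥ ← ¬p(0_d)`, so it is not one of `Π ∪ ∅`.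
-/

theorem progSat_union {P R : Type} [Semiring R] {A B : Set (NRule P R)}
    {I : HTI (GAtom P R)} {w : W} :
    progSat (A ∪ B) I w ↔ progSat A I w ∧ progSat B I w := by
  simp only [progSat, Set.mem_union, or_imp, forall_and]

theorem StrongEq.of_progSat_iff {P R : Type} [Semiring R] {P1 P2 : Set (NRule P R)}
    (h : ∀ I : HTI (GAtom P R), progSat P1 I .H ↔ progSat P2 I .H) : StrongEq P1 P2 := by
  intro Pr J
  have hPr (I : HTI (GAtom P R)) : progSat (P1 ∪ Pr) I .H ↔ progSat (P2 ∪ Pr) I .H := by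
    rw [progSat_union, progSat_union, h]
  simp only [EqModel, hPr]

theorem HTI.at_mk_self {A : Type*} (J : Set A) (w : W) :
    (⟨J, J, le_refl J⟩ : HTI A).at w = J := by
  cases w <;> rfl

theorem W.le_T (w : W) : W.le w .T := by
  cases w <;> trivial

theorem leastClosed_subset {X : Fin n → MatR d} {S : Set (MatR d)} (hX : ∀ i, X i ∈ S)
    (hmul : ∀ y z, y ∈ S → z ∈ S → y * z ∈ S) : leastClosed X ⊆ S :=
  Set.sInter_subset_of_mem ⟨hX, hmul⟩

theorem mem_leastClosed (X : Fin n → MatR d) (i : Fin n) : X i ∈ leastClosed X :=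
  Set.mem_sInter.2 fun _ hS => hS.1 i

theorem mul_mem_leastClosed {X : Fin n → MatR d} {y z : MatR d} (hy : y ∈ leastClosed X)
    (hz : z ∈ leastClosed X) : y * z ∈ leastClosed X :=
  Set.mem_sInter.2 fun S hS => hS.2 y z (hy S hS) (hz S hS)

theorem prod_ofFn_mem_leastClosed (X : Fin n → MatR d) {k : ℕ} (f : Fin (k + 1) → Fin n) :
    (List.ofFn fun j => X (f j)).prod ∈ leastClosed X := by
  induction k with
  | zero => simpa using mem_leastClosed X (f 0)
  | succ k ih =>
    rw [List.ofFn_succ, List.prod_cons]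
    exact mul_mem_leastClosed (mem_leastClosed X (f 0)) (ih fun j => f j.succ)

theorem leastClosed_eq_setOf_prod_ofFn (X : Fin n → MatR d) :
    leastClosed X = {m | ∃ k : ℕ, 1 ≤ k ∧ ∃ f : Fin k → Fin n,
      (List.ofFn fun j => X (f j)).prod = m} := by
  refine subset_antisymm (leastClosed_subset (fun i => ⟨1, le_rfl, fun _ => i, by simp⟩) ?_) ?_
  · rintro _ _ ⟨k₁, hk₁, f₁, rfl⟩ ⟨k₂, -, f₂, rfl⟩
    refine ⟨k₁ + k₂, le_add_right hk₁, Fin.append f₁ f₂, ?_⟩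
    simp [List.ofFn_add, Fin.append_right]
  · rintro _ ⟨_ | k, hk, f, rfl⟩
    · exact absurd hk (by decide)
    · exact prod_ofFn_mem_leastClosed X f

def atomOf (m : MatR d) : GAtom Unit (MatR d) := ((), [m])

theorem atomOf_injective : Function.Injective (atomOf (d := d)) := by
  intro m m' h
  simpa [atomOf] using h

theorem factRule_sat_H_iff {m : MatR d} {I : HTI (GAtom Unit (MatR d))} :
    (factRule m).sat I .H ↔ atomOf m ∈ I.h := by
  unfold NRule.sat factRule
  simp only [List.not_mem_nil, false_imp_iff, implies_true, and_self, true_implies, instA,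
    List.map_cons, List.map_nil, Sum.elim_inr, id]
  constructor
  · exact fun h => h ![] .H trivial
  · rintro h _ (_ | _) _
    exacts [h, I.sub h]

theorem botRule_sat_iff {I : HTI (GAtom Unit (MatR d))} {w : W} :
    (botRule d).sat I w ↔ atomOf 0 ∈ I.t := by
  unfold NRule.sat botRule
  simp only [List.not_mem_nil, false_imp_iff, implies_true, and_true, true_and, instA,
    List.mem_singleton, forall_eq, List.map_cons, List.map_nil, Sum.elim_inr, id, imp_false,
    not_forall, not_not]
  constructor
  · intro h
    obtain ⟨_ | _, -, h0⟩ := h ![] .T (W.le_T w)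
    exacts [I.sub h0, h0]
  · exact fun h0 _ _ _ => ⟨.T, W.le_T _, h0⟩

theorem prodRule_sat_iff {I : HTI (GAtom Unit (MatR d))} {w : W} :
    (prodRule d).sat I w ↔ ∀ w', W.le w w' → ∀ y z : MatR d,
      atomOf y ∈ I.at w' → atomOf z ∈ I.at w' → atomOf (y * z) ∈ I.at w' := by
  unfold NRule.sat prodRule
  simp only [List.not_mem_nil, false_imp_iff, implies_true, true_and, instA, List.mem_singleton,
    forall_eq, List.map_cons, List.map_nil, Sum.elim_inl, List.forall_mem_cons, Trm.eval]
  constructor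
  · exact fun h w' hw y z hy hz => h ![y * z, y, z] w' hw ⟨⟨hy, hz⟩, rfl⟩
  · rintro h γ w' hw ⟨⟨hy, hz⟩, hγ⟩
    exact hγ ▸ h w' hw _ _ hy hz

def leastModel (X : Fin n → MatR d) : Set (GAtom Unit (MatR d)) :=
  atomOf '' leastClosed X

theorem atomOf_mem_leastModel {X : Fin n → MatR d} {m : MatR d} :
    atomOf m ∈ leastModel X ↔ m ∈ leastClosed X :=
  atomOf_injective.mem_set_image

theorem leastModel_subset_of_progSat {X : Fin n → MatR d} {I : HTI (GAtom Unit (MatR d))}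
    (hI : progSat (mortalProgPos X) I .H) : leastModel X ⊆ I.h := by
  have hfact (i : Fin n) : atomOf (X i) ∈ I.h :=
    factRule_sat_H_iff.1 (hI _ (Or.inl ⟨i, rfl⟩))
  have hprod := prodRule_sat_iff.1 (hI _ (Or.inr rfl)) .H trivial
  rintro _ ⟨m, hm, rfl⟩
  exact leastClosed_subset (S := {m | atomOf m ∈ I.h}) hfact hprod hm

theorem progSat_leastModel (X : Fin n → MatR d) :
    progSat (mortalProgPos X) ⟨leastModel X, leastModel X, le_rfl⟩ .H := by
  rintro _ (⟨i, rfl⟩ | rfl)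
  · exact factRule_sat_H_iff.2 (atomOf_mem_leastModel.2 (mem_leastClosed X i))
  · refine prodRule_sat_iff.2 fun w _ y z hy hz => ?_
    rw [HTI.at_mk_self, atomOf_mem_leastModel] at hy hz ⊢
    exact mul_mem_leastClosed hy hz

theorem eqModel_leastModel (X : Fin n → MatR d) : EqModel (mortalProgPos X) (leastModel X) :=
  ⟨progSat_leastModel X, fun _ hsub hne hI =>
    hne (hsub.antisymm (leastModel_subset_of_progSat hI))⟩

theorem progSat_mortalProgFull_iff {X : Fin n → MatR d} {I : HTI (GAtom Unit (MatR d))}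
    {w : W} :
    progSat (mortalProgFull X) I w ↔ progSat (mortalProgPos X) I w ∧ (botRule d).sat I w :=
  progSat_union.trans (and_congr_right' (by simp only [progSat, Set.mem_singleton_iff, forall_eq]))

theorem strongEq_mortalProgFull_iff (X : Fin n → MatR d) :
    StrongEq (mortalProgFull X) (mortalProgPos X) ↔ (0 : MatR d) ∈ leastClosed X := by
  constructor
  · intro hSE
    have hfull : EqModel (mortalProgFull X ∪ ∅) (leastModel X) :=
      (hSE ∅ _).2 (by rw [Set.union_empty]; exact eqModel_leastModel X)
    rw [Set.union_empty, EqModel, progSat_mortalProgFull_iff, botRule_sat_iff] at hfull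
    exact atomOf_mem_leastModel.1 hfull.1.2
  · refine fun h0 => StrongEq.of_progSat_iff fun I => ?_
    rw [progSat_mortalProgFull_iff, and_iff_left_iff_imp, botRule_sat_iff]
    exact fun hI => I.sub (leastModel_subset_of_progSat hI (atomOf_mem_leastModel.2 h0))

theorem mortal_matrix_strong_equivalence_general
    (X : Fin n → MatR d) :
    (StrongEq (mortalProgFull X) (mortalProgPos X) ↔
      ∃ k : ℕ, 1 ≤ k ∧ ∃ f : Fin k → Fin n,
        (List.ofFn fun j => X (f j)).prod = (0 : MatR d))
    ∧ ((∃ k : ℕ, 1 ≤ k ∧ ∃ f : Fin k → Fin n,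
        (List.ofFn fun j => X (f j)).prod = (0 : MatR d)) ↔
      (0 : MatR d) ∈ leastClosed X) := by
  have hzero := Set.ext_iff.1 (leastClosed_eq_setOf_prod_ofFn X) 0
  exact ⟨(strongEq_mortalProgFull_iff X).trans hzero, hzero.symm⟩

/-- **Mortal Matrix reduction for strong equivalence**: for `d, n ≥ 1` and
    matrices `X₁, …, Xₙ ∈ ℤ^{d×d}`, letting `Π'` consist of the facts `p(Xᵢ) ←`
    and the rule `p(Y) ← p(Z₁), p(Z₂), Y =_R Z₁ * Z₂`, and `Π = Π' ∪ {⊥ ← ¬p(0_d)}`: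
    `Π` and `Π'` are strongly equivalent iff some nonempty product of the matrices
    is `0_d`; equivalently, iff `p(0_d)` belongs to the least set of atoms closed
    under the rules of `Π'`. -/
theorem mortal_matrix_strong_equivalence (hd : 1 ≤ d) (hn : 1 ≤ n)
    (X : Fin n → MatR d) :
    (StrongEq (mortalProgFull X) (mortalProgPos X) ↔
      ∃ k : ℕ, 1 ≤ k ∧ ∃ f : Fin k → Fin n,
        (List.ofFn fun j => X (f j)).prod = (0 : MatR d))
    ∧ ((∃ k : ℕ, 1 ≤ k ∧ ∃ f : Fin k → Fin n,
        (List.ofFn fun j => X (f j)).prod = (0 : MatR d)) ↔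
      (0 : MatR d) ∈ leastClosed X) :=
  mortal_matrix_strong_equivalence_general X

end MortalMatrix
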